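/- arXiv:2307.05630 — 2 statements merged into one kernel-verified Lean document; each statement's English description precedes it below -/
import Mathlib

section
/- Let X be a metrizable space and Y a metrizable Souslin space (each with its Borel σ-algebra), let B_X ⊆ Σ_X and B_Y ⊆ Σ_Y be countable families of conditioning events, and let f: X → Y be a Borel measurable function with f⁻¹(B_Y) = B_X. Then the pushforward-CPS map L̄_f: Δ^{B_X}(X) → Δ^{B_Y}(Y), defined by L̄_f(μ)(E|B) := μ(f⁻¹(E) | f⁻¹(B)), is Borel measurable (with respect to the topologies these CPS spaces inherit as subspaces of Δ(X)^{B_X} and Δ(Y)^{B_Y}). -/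
open MeasureTheory Set

noncomputable section

/-- A family of conditioning events: a nonempty family of measurable sets not containing `∅`. -/
def IsCondFamily {X : Type*} [MeasurableSpace X] (B : Set (Set X)) : Prop :=
  B.Nonempty ∧ ∅ ∉ B ∧ ∀ b ∈ B, MeasurableSet b

/-- The defining conditions of a conditional probability system (CPS) on `(X, Σ_X, B)`:
`μ(B|B) = 1`, and the chain rule `μ(A|B)·μ(B|C) = μ(A|C)` whenever `A ⊆ B ⊆ C`. -/
def IsCPS {X : Type*} [MeasurableSpace X] (B : Set (Set X))
    (μ : B → ProbabilityMeasure X) : Prop :=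
  (∀ b : B, (μ b : Measure X) (b : Set X) = 1) ∧
  ∀ (A : Set X), MeasurableSet A → ∀ b c : B, A ⊆ (b : Set X) → (b : Set X) ⊆ (c : Set X) →
    (μ b : Measure X) A * (μ c : Measure X) (b : Set X) = (μ c : Measure X) A

/-- The space `Δ^B(X)` of conditional probability systems on `(X, Σ_X, B)`,
viewed as a subset of `Δ(X)^B`. -/
def CPSs (X : Type*) [MeasurableSpace X] (B : Set (Set X)) : Type _ :=
  {μ : B → ProbabilityMeasure X // IsCPS B μ}

/-- `Δ^B(X)` carries the subspace topology inherited from the product `Δ(X)^B`,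
where `Δ(X)` has the topology of weak convergence. -/
instance (X : Type*) [MeasurableSpace X] [TopologicalSpace X] [OpensMeasurableSpace X]
    (B : Set (Set X)) : TopologicalSpace (CPSs X B) :=
  inferInstanceAs (TopologicalSpace {μ : B → ProbabilityMeasure X // IsCPS B μ})

/-- A Souslin space: the image of a complete, separable metric space under a
continuous surjection. -/
def IsSouslin (X : Type*) [TopologicalSpace X] : Prop :=
  ∃ (Z : Type) (m : MetricSpace Z),
    letI := m
    CompleteSpace Z ∧ TopologicalSpace.SeparableSpace Z ∧
      ∃ f : Z → X, Continuous f ∧ Function.Surjective f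

/-- A Lusin space: the image of a complete, separable metric space under a
continuous bijection. -/
def IsLusin (X : Type*) [TopologicalSpace X] : Prop :=
  ∃ (Z : Type) (m : MetricSpace Z),
    letI := m
    CompleteSpace Z ∧ TopologicalSpace.SeparableSpace Z ∧
      ∃ f : Z → X, Continuous f ∧ Function.Bijective f

/-- The array of image measures defining the pushforward-CPS map `L̄_f`:
`L̄_f(μ)(E|B) = μ(f⁻¹(E)|f⁻¹(B))`. -/
def pushArray {X Y : Type*} [MeasurableSpace X] [MeasurableSpace Y]
    {BX : Set (Set X)} {BY : Set (Set Y)} (f : X → Y) (hf : Measurable f)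
    (hB : BX = (fun E => f ⁻¹' E) '' BY) (μ : BX → ProbabilityMeasure X) :
    BY → ProbabilityMeasure Y :=
  fun b =>
    ⟨((μ ⟨f ⁻¹' (b : Set Y), by rw [hB]; exact mem_image_of_mem _ b.2⟩ : ProbabilityMeasure X) :
        Measure X).map f,
      Measure.isProbabilityMeasure_map hf.aemeasurable⟩

/-- The pushforward-CPS map is well defined: it maps CPSs to CPSs. -/
theorem isCPS_pushArray {X Y : Type*} [MeasurableSpace X] [MeasurableSpace Y]
    {BX : Set (Set X)} {BY : Set (Set Y)} (f : X → Y) (hf : Measurable f)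
    (hBY : ∀ b ∈ BY, MeasurableSet b) (hB : BX = (fun E => f ⁻¹' E) '' BY)
    {μ : BX → ProbabilityMeasure X} (hμ : IsCPS BX μ) : IsCPS BY (pushArray f hf hB μ) := by
  constructor
  · intro b
    show (Measure.map f _) (b : Set Y) = 1
    rw [Measure.map_apply hf (hBY b b.2)]
    exact hμ.1 ⟨f ⁻¹' (b : Set Y), by rw [hB]; exact mem_image_of_mem _ b.2⟩
  · intro A hA b c hAb hbc
    show (Measure.map f _) A * (Measure.map f _) (b : Set Y) = (Measure.map f _) A
    rw [Measure.map_apply hf hA, Measure.map_apply hf (hBY b b.2), Measure.map_apply hf hA]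
    exact hμ.2 (f ⁻¹' A) (hf hA) _ _ (preimage_mono hAb) (preimage_mono hbc)

/-- The pushforward-CPS map `L̄_f : Δ^{B_X}(X) → Δ^{B_Y}(Y)`. -/
def pushCPS {X Y : Type*} [MeasurableSpace X] [MeasurableSpace Y]
    {BX : Set (Set X)} {BY : Set (Set Y)} (f : X → Y) (hf : Measurable f)
    (hBY : ∀ b ∈ BY, MeasurableSet b) (hB : BX = (fun E => f ⁻¹' E) '' BY)
    (μ : CPSs X BX) : CPSs Y BY :=
  ⟨pushArray f hf hB μ.1, isCPS_pushArray f hf hBY hB μ.2⟩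

/-! Since `B_Y` is countable and `Δ(Y)` turns out to be second countable, the Borel σ-algebra of
`Δ^{B_Y}(Y)` is the trace of the product of the Borel σ-algebras of `Δ(Y)`, so it suffices to treat
one coordinate `μ ↦ f_* μ(·|f⁻¹(B))`: a continuous projection followed by a pushforward.

On a separable metric space the weak topology of `Δ(Y)` is induced by countably many integrals
`ν ↦ ∫ g_j dν`, where `g_j` are thickened indicators of finite unions of balls around a countable
dense set (the open-set portmanteau criterion does the work). This gives second countability, and
puts the Borel σ-algebra of `Δ(Y)` inside the evaluation (Giry) σ-algebra, for which pushforward is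
measurable. Conversely, on a metrizable `X` each `ν ↦ ν(F)`, `F` closed, is a pointwise limit of
continuous maps `ν ↦ ∫ g_n dν`, so continuous maps into `Δ(X)` are measurable for the evaluation
σ-algebra. -/

section

open Filter Topology TopologicalSpace Metric BoundedContinuousFunction
open scoped ENNReal NNReal

theorem Dense.exists_mem_ball_thickening_ball_subset {Ω : Type*} [PseudoMetricSpace Ω]
    {s : Set Ω} (hs : Dense s) {G : Set Ω} (hG : IsOpen G) {y : Ω} (hy : y ∈ G) :
    ∃ x ∈ s, ∃ k : ℕ, y ∈ ball x (1 / (k + 1)) ∧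
      thickening (1 / (k + 1)) (ball x (1 / (k + 1))) ⊆ G := by
  obtain ⟨ε, hε, hyG⟩ := isOpen_iff.1 hG y hy
  obtain ⟨k, hk⟩ := exists_nat_one_div_lt (div_pos hε three_pos)
  obtain ⟨x, hx, hyx⟩ := hs.exists_dist_lt y (ε := 1 / (k + 1)) (by positivity)
  refine ⟨x, hx, k, mem_ball.2 hyx, (Metric.thickening_ball _ _ _).trans (.trans ?_ hyG)⟩
  refine ball_subset_ball' ?_
  rw [dist_comm]
  linarith

namespace MeasureTheory.ProbabilityMeasure

section MeasurableOfContinuous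

variable {Ω α : Type*} [TopologicalSpace Ω] [MeasurableSpace Ω] [HasOuterApproxClosed Ω]
  [BorelSpace Ω] [TopologicalSpace α] [MeasurableSpace α] [OpensMeasurableSpace α]
  {g : α → ProbabilityMeasure Ω}

theorem measurable_measure_apply_of_continuous (hg : Continuous g) {F : Set Ω}
    (hF : IsClosed F) : Measurable fun a => (g a : Measure Ω) F :=
  ENNReal.measurable_of_tendsto
    (fun _ => ((continuous_lintegral_boundedContinuousFunction _).comp hg).measurable)
    (tendsto_pi_nhds.2 fun _ => HasOuterApproxClosed.tendsto_lintegral_apprSeq hF _)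

theorem measurable_of_continuous (hg : Continuous g) : Measurable g := by
  refine Measurable.subtype_mk (f := fun a => (g a : Measure Ω)) ?_
  exact .measure_of_isPiSystem_of_isProbabilityMeasure
    (BorelSpace.measurable_eq.trans borel_eq_generateFrom_isClosed) isPiSystem_isClosed
    fun _ hF => measurable_measure_apply_of_continuous hg hF

end MeasurableOfContinuous

theorem measurableSpace_le_borel {Ω : Type*} [TopologicalSpace Ω] [MeasurableSpace Ω]
    [HasOuterApproxClosed Ω] [BorelSpace Ω] :
    (inferInstance : MeasurableSpace (ProbabilityMeasure Ω)) ≤ borel (ProbabilityMeasure Ω) := by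
  borelize (ProbabilityMeasure Ω)
  exact fun _ hs => measurable_of_continuous (α := ProbabilityMeasure Ω) continuous_id hs

section TestFunctions

variable {Ω : Type*} [PseudoMetricSpace Ω] [MeasurableSpace Ω] [OpensMeasurableSpace Ω]

theorem lintegral_thickenedIndicator_le_measure_thickening (μ : Measure Ω) {δ : ℝ} (hδ : 0 < δ)
    (E : Set Ω) : ∫⁻ x, thickenedIndicator hδ E x ∂μ ≤ μ (thickening δ E) := by
  rw [← lintegral_indicator_one isOpen_thickening.measurableSet]
  refine lintegral_mono fun x => ?_
  by_cases hx : x ∈ thickening δ E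
  · simpa [hx] using thickenedIndicator_le_one hδ E x
  · simp [hx, thickenedIndicator_zero hδ E hx]

variable {J : Type*} [Countable J] {F : J → Set Ω} {δ : J → ℝ}

theorem tendsto_of_forall_tendsto_lintegral_thickenedIndicator
    (hδ : ∀ j, 0 < δ j) (hF : ∀ j, MeasurableSet (F j))
    (hcover : ∀ G, IsOpen G → ∀ x ∈ G, ∃ j, x ∈ F j ∧ thickening (δ j) (F j) ⊆ G)
    (hdir : ∀ i j, ∃ k, F i ∪ F j ⊆ F k ∧
      thickening (δ k) (F k) ⊆ thickening (δ i) (F i) ∪ thickening (δ j) (F j))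
    {ι : Type*} {L : Filter ι} [L.IsCountablyGenerated] [L.NeBot]
    {μs : ι → ProbabilityMeasure Ω} {ν : ProbabilityMeasure Ω}
    (h : ∀ j, Tendsto (fun i => ∫⁻ x, thickenedIndicator (hδ j) (F j) x ∂(μs i)) L
      (𝓝 (∫⁻ x, thickenedIndicator (hδ j) (F j) x ∂ν))) :
    Tendsto μs L (𝓝 ν) := by
  refine tendsto_of_forall_isOpen_le_liminf' fun G hG => ?_
  let A := {j | thickening (δ j) (F j) ⊆ G}
  have hGA : G ⊆ ⋃ j : A, F j := fun x hx => by
    obtain ⟨j, hxj, hjG⟩ := hcover G hG x hx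
    exact mem_iUnion.2 ⟨⟨j, hjG⟩, hxj⟩
  have hA : Directed (· ⊆ ·) fun j : A => F j := fun i j => by
    obtain ⟨k, hFk, hδk⟩ := hdir i j
    exact ⟨⟨k, hδk.trans (union_subset i.2 j.2)⟩, subset_union_left.trans hFk,
      subset_union_right.trans hFk⟩
  calc (ν : Measure Ω) G ≤ ⨆ j : A, (ν : Measure Ω) (F j) :=
        (measure_mono hGA).trans_eq hA.measure_iUnion
    _ ≤ L.liminf fun i => (μs i : Measure Ω) G := iSup_le fun j => calc
      (ν : Measure Ω) (F j) ≤ ∫⁻ x, thickenedIndicator (hδ j) (F j) x ∂ν :=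
          measure_le_lintegral_thickenedIndicator _ (hF j) (hδ j)
      _ = L.liminf fun i => ∫⁻ x, thickenedIndicator (hδ j) (F j) x ∂(μs i) :=
          (h j).liminf_eq.symm
      _ ≤ L.liminf fun i => (μs i : Measure Ω) G := liminf_le_liminf <| .of_forall fun i =>
          (lintegral_thickenedIndicator_le_measure_thickening _ (hδ j) (F j)).trans
            (measure_mono j.2)

theorem isInducing_lintegral_thickenedIndicator
    (hδ : ∀ j, 0 < δ j) (hF : ∀ j, MeasurableSet (F j))
    (hcover : ∀ G, IsOpen G → ∀ x ∈ G, ∃ j, x ∈ F j ∧ thickening (δ j) (F j) ⊆ G)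
    (hdir : ∀ i j, ∃ k, F i ∪ F j ⊆ F k ∧
      thickening (δ k) (F k) ⊆ thickening (δ i) (F i) ∪ thickening (δ j) (F j)) :
    IsInducing fun (ν : ProbabilityMeasure Ω) j => ∫⁻ x, thickenedIndicator (hδ j) (F j) x ∂ν := by
  set Φ := fun (ν : ProbabilityMeasure Ω) j => ∫⁻ x, thickenedIndicator (hδ j) (F j) x ∂ν
  refine isInducing_iff_nhds.2 fun ν => le_antisymm ?_ ?_
  · exact ((_root_.continuous_pi fun j => continuous_lintegral_boundedContinuousFunction _).tendsto
      ν).le_comap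
  · have : (comap Φ (𝓝 (Φ ν))).NeBot := comap_neBot fun t ht => ⟨ν, mem_of_mem_nhds ht⟩
    exact tendsto_of_forall_tendsto_lintegral_thickenedIndicator hδ hF hcover hdir
      (L := comap Φ (𝓝 (Φ ν))) (μs := id) fun j => tendsto_pi_nhds.1 (tendsto_comap (f := Φ)) j

end TestFunctions

universe u

theorem exists_isInducing_lintegral {Ω : Type u} [PseudoMetricSpace Ω] [SeparableSpace Ω]
    [MeasurableSpace Ω] [OpensMeasurableSpace Ω] :
    ∃ (J : Type u) (_ : Countable J) (g : J → Ω →ᵇ ℝ≥0),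
      IsInducing fun (ν : ProbabilityMeasure Ω) j => ∫⁻ x, g j x ∂ν := by
  classical
  obtain ⟨s, hsc, hsd⟩ := exists_countable_dense Ω
  have := hsc.to_subtype
  let r : ℕ → ℝ := fun k => 1 / (k + 1)
  have hr : ∀ k, 0 < r k := fun k => by positivity
  have hr_anti : Antitone r := fun m n h => by
    simp only [r]
    gcongr
  let F : Finset (s × ℕ) × ℕ → Set Ω := fun j => ⋃ p ∈ j.1, ball (p.1 : Ω) (r p.2)
  refine ⟨Finset (s × ℕ) × ℕ, inferInstance, fun j => thickenedIndicator (hr j.2) (F j),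
    isInducing_lintegral_thickenedIndicator (F := F) (δ := fun j => r j.2) (fun j => hr j.2)
      (fun j => Finset.measurableSet_biUnion _ fun p _ => measurableSet_ball) ?_ ?_⟩
  · intro G hG y hy
    obtain ⟨x, hx, k, hyx, hxG⟩ := hsd.exists_mem_ball_thickening_ball_subset hG hy
    exact ⟨({(⟨x, hx⟩, k)}, k), by simpa [F, r] using hyx, by simpa [F, r] using hxG⟩
  · rintro ⟨S, m⟩ ⟨S', m'⟩
    refine ⟨(S ∪ S', max m m'), ?_, ?_⟩
    · simp only [F, Finset.set_biUnion_union, subset_refl]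
    · simp only [F, Finset.set_biUnion_union, thickening_union]
      exact union_subset_union (thickening_mono (hr_anti (le_max_left m m')) _)
        (thickening_mono (hr_anti (le_max_right m m')) _)

section SeparableMetrizable

variable {Ω : Type*} [TopologicalSpace Ω] [PseudoMetrizableSpace Ω] [SeparableSpace Ω]
  [MeasurableSpace Ω]

instance secondCountableTopology [OpensMeasurableSpace Ω] :
    SecondCountableTopology (ProbabilityMeasure Ω) := by
  let := pseudoMetrizableSpacePseudoMetric Ω
  obtain ⟨J, _, g, hg⟩ := exists_isInducing_lintegral (Ω := Ω)
  exact hg.secondCountableTopology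

theorem borel_le_measurableSpace [OpensMeasurableSpace Ω] :
    borel (ProbabilityMeasure Ω) ≤ (inferInstance : MeasurableSpace (ProbabilityMeasure Ω)) := by
  let := pseudoMetrizableSpacePseudoMetric Ω
  obtain ⟨J, _, g, hg⟩ := exists_isInducing_lintegral (Ω := Ω)
  rw [hg.eq_induced, borel_comap, ← BorelSpace.measurable_eq]
  exact (measurable_pi_lambda _ fun j => (Measure.measurable_lintegral
    (g j).continuous.measurable.coe_nnreal_ennreal).comp measurable_subtype_coe).comap_le

instance borelSpace [BorelSpace Ω] : BorelSpace (ProbabilityMeasure Ω) :=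
  ⟨measurableSpace_le_borel.antisymm borel_le_measurableSpace⟩

end SeparableMetrizable

end MeasureTheory.ProbabilityMeasure

theorem CPSs.continuous_apply {X : Type*} [MeasurableSpace X] [TopologicalSpace X]
    [OpensMeasurableSpace X] {B : Set (Set X)} (b : B) :
    Continuous fun μ : CPSs X B => μ.1 b :=
  (_root_.continuous_apply b).comp continuous_subtype_val

theorem IsSouslin.separableSpace {X : Type*} [TopologicalSpace X] (h : IsSouslin X) :
    SeparableSpace X := by
  obtain ⟨Z, _, -, _, f, hf, hsurj⟩ := h
  exact hsurj.denseRange.separableSpace hf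

end

theorem pushCPS_measurable_general {X Y : Type*}
    [TopologicalSpace X] [MeasurableSpace X] [BorelSpace X] [TopologicalSpace.MetrizableSpace X]
    [TopologicalSpace Y] [MeasurableSpace Y] [BorelSpace Y] [TopologicalSpace.MetrizableSpace Y]
    (hY : IsSouslin Y)
    {BX : Set (Set X)} {BY : Set (Set Y)} (hBY : IsCondFamily BY)
    (hBYc : BY.Countable)
    (f : X → Y) (hf : Measurable f) (hB : BX = (fun E => f ⁻¹' E) '' BY) :
    @Measurable (CPSs X BX) (CPSs Y BY) (borel _) (borel _)
      (pushCPS f hf hBY.2.2 hB) := by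
  have := hY.separableSpace
  have := hBYc.to_subtype
  let : MeasurableSpace (CPSs X BX) := borel _
  have : OpensMeasurableSpace (CPSs X BX) := ⟨le_rfl⟩
  change @Measurable _ {μ : BY → ProbabilityMeasure Y // IsCPS BY μ} _ (borel _) _
  rw [← BorelSpace.measurable_eq (α := {μ : BY → ProbabilityMeasure Y // IsCPS BY μ})]
  refine Measurable.subtype_mk
    (measurable_pi_lambda (fun μ : CPSs X BX => pushArray f hf hB μ.1) fun b => ?_)
  refine Measurable.subtype_mk ?_
  exact (Measure.measurable_map f hf).comp <| measurable_subtype_coe.comp <|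
    ProbabilityMeasure.measurable_of_continuous (CPSs.continuous_apply _)

/-- Lemma 2(ii), measurable case: if `X` is metrizable, `Y` is a metrizable Souslin space,
`B_X`, `B_Y` are countable families of conditioning events and `f : X → Y` is Borel measurable
with `f⁻¹(B_Y) = B_X`, then the pushforward-CPS map `L̄_f : Δ^{B_X}(X) → Δ^{B_Y}(Y)` is
Borel measurable. -/
theorem pushCPS_measurable {X Y : Type*}
    [TopologicalSpace X] [MeasurableSpace X] [BorelSpace X] [TopologicalSpace.MetrizableSpace X]
    [TopologicalSpace Y] [MeasurableSpace Y] [BorelSpace Y] [TopologicalSpace.MetrizableSpace Y]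
    (hY : IsSouslin Y)
    {BX : Set (Set X)} {BY : Set (Set Y)} (hBX : IsCondFamily BX) (hBY : IsCondFamily BY)
    (hBXc : BX.Countable) (hBYc : BY.Countable)
    (f : X → Y) (hf : Measurable f) (hB : BX = (fun E => f ⁻¹' E) '' BY) :
    @Measurable (CPSs X BX) (CPSs Y BY) (borel _) (borel _)
      (pushCPS f hf hBY.2.2 hB) :=
  pushCPS_measurable_general hY hBY hBYc f hf hB

end
end

section
/- Let X, Y, Z be metrizable Souslin spaces, let B ⊆ Σ_X be a countable family of conditioning events, let f₁: Y → Z be a Borel measurable surjection, and define f₂: X × Y → X × Z by f₂ := (Id_X, f₁). Then the pushforward-CPS map L̄_{f₂}: Δ^B(X × Y) → Δ^B(X × Z) is surjective: for every conditional probability system ν on X × Z (with conditioning events the cylinders B × Z, B ∈ B) there exists a conditional probability system μ on X × Y (with conditioning events the cylinders B × Y, B ∈ B) such that L̄_{f₂}(μ) = ν. -/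
open MeasureTheory Set

noncomputable section

/-- Given a family `B` of subsets of `X`, the family of conditioning events of `X × Y`:
all cylinders `b ×ˢ univ` with `b ∈ B`. -/
def cylFam {X : Type*} (B : Set (Set X)) (Y : Type*) : Set (Set (X × Y)) :=
  (fun b => b ×ˢ (Set.univ : Set Y)) '' B


/-!
Since `B` is countable, one finite measure `ρ` on `X × Z` dominates every `ν(·|b × Z)`. The map
`F = (id, f₁)` from the Souslin space `X × Y` onto `X × Z` has a measurable `g` with `F ∘ g = id`
`ρ`-a.e., hence `ν(·|b × Z)`-a.e. for all `b`, and `μ(·|F⁻¹ C) := g_* ν(·|C)` is then a CPS which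
`F` pushes forward to `ν`.

To build `g`, parametrize `X × Y` by `ℕ^ℕ` so that `F` becomes a continuous surjection
`q : ℕ^ℕ → X × Z`, and choose the digits of `s t ∈ ℕ^ℕ` greedily: the next digit after the word `w`
is the least `i` such that `t` lies in a measurable hull of `q(N_{w i})`, where `N_w ⊆ ℕ^ℕ` is the
cylinder of sequences beginning with `w` and the hull is taken for `ρ` restricted to the piece
selected for `w`. This keeps `q(N_w)` of full outer measure in that piece, so a.e. `t` lies in the
closure of every `q(N_w)` along its word; these sets shrink to `q(s t)`.
-/

open Topology

namespace PiNat

variable {α : Type*}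

/-- Words are read backwards, as in `PiNat.res`: the last digit is the head of the list. -/
def listCylinder (w : List α) : Set (ℕ → α) := {β | res β w.length = w}

@[simp]
theorem listCylinder_nil : listCylinder ([] : List α) = univ := by
  ext β; simp [listCylinder]

theorem iUnion_listCylinder_cons (w : List α) :
    ⋃ i, listCylinder (i :: w) = listCylinder w := by
  ext β
  simp only [listCylinder, mem_iUnion, Set.mem_ofPred_eq, List.length_cons, res_succ,
    List.cons.injEq]
  exact ⟨fun ⟨_, _, h⟩ => h, fun h => ⟨_, rfl, h⟩⟩

theorem listCylinder_res (β : ℕ → α) (n : ℕ) : listCylinder (res β n) = cylinder β n := by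
  rw [cylinder_eq_res, listCylinder, res_length]

variable [TopologicalSpace α] [DiscreteTopology α]

theorem exists_cylinder_subset_of_mem_nhds {β : ℕ → α} {s : Set (ℕ → α)} (hs : s ∈ 𝓝 β) :
    ∃ n, cylinder β n ⊆ s := by
  obtain ⟨_, ⟨x, n, rfl⟩, hβ, hsub⟩ := (isTopologicalBasis_cylinders _).mem_nhds_iff.1 hs
  exact ⟨n, (mem_cylinder_iff_eq.1 hβ).symm ▸ hsub⟩

theorem eq_of_forall_mem_closure_image_cylinder {V : Type*} [TopologicalSpace V] [T2Space V]
    {q : (ℕ → α) → V} (hq : Continuous q) {β : ℕ → α} {t : V}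
    (ht : ∀ n, t ∈ closure (q '' cylinder β n)) : q β = t := by
  refine eq_of_nhds_neBot (Filter.inf_neBot_iff.2 fun U hU W hW => ?_)
  obtain ⟨n, hn⟩ := exists_cylinder_subset_of_mem_nhds (hq.continuousAt hU)
  obtain ⟨v, hvW, hvq⟩ := mem_closure_iff_nhds.1 (ht n) W hW
  exact ⟨v, image_subset_iff.2 hn hvq, hvW⟩

end PiNat

namespace SouslinSection

open PiNat

variable {V : Type*} [MeasurableSpace V] (q : (ℕ → ℕ) → V) (ρ : Measure V)

def tree : List ℕ → Set V
  | [] => univ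
  | i :: w => toMeasurable (ρ.restrict (tree w)) (q '' listCylinder (i :: w)) ∩ tree w

theorem measurableSet_tree : ∀ w, MeasurableSet (tree q ρ w)
  | [] => .univ
  | _ :: w => (measurableSet_toMeasurable _ _).inter (measurableSet_tree w)

theorem restrict_tree_image_listCylinder [SFinite ρ] (hq : Function.Surjective q) :
    ∀ w, ρ.restrict (tree q ρ w) (q '' listCylinder w) = ρ (tree q ρ w)
  | [] => by simp [tree, hq.range_eq]
  | i :: w => by
    set S := q '' listCylinder (i :: w)
    set lam := ρ.restrict (tree q ρ w)
    calc ρ.restrict (tree q ρ (i :: w)) S = lam.restrict (toMeasurable lam S) S := by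
          rw [Measure.restrict_restrict (measurableSet_toMeasurable _ _)]; rfl
      _ = lam S := by rw [Measure.restrict_toMeasurable_of_sFinite,
          Measure.restrict_apply_self]
      _ = ρ (tree q ρ (i :: w)) := by
          rw [← measure_toMeasurable, Measure.restrict_apply (measurableSet_toMeasurable _ _)]; rfl

/-- The `ᶜ` alternative makes the defining set nonempty, so that `digit` is a `Nat.find`. -/
def digit (w : List ℕ) (t : V) : ℕ :=
  sInf {i | t ∈ tree q ρ (i :: w) ∪ (⋃ j, tree q ρ (j :: w))ᶜ}

theorem mem_tree_digit {w : List ℕ} {t : V} (ht : t ∈ ⋃ j, tree q ρ (j :: w)) :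
    t ∈ tree q ρ (digit q ρ w t :: w) := by
  obtain ⟨j, hj⟩ := mem_iUnion.1 ht
  have hmem := Nat.sInf_mem (s := {i | t ∈ tree q ρ (i :: w) ∪ (⋃ j, tree q ρ (j :: w))ᶜ})
    ⟨j, Or.inl hj⟩
  exact hmem.resolve_right (not_not_intro ht)

theorem measurable_digit (w : List ℕ) : Measurable (digit q ρ w) := by
  have hex : ∀ t, ∃ i, t ∈ tree q ρ (i :: w) ∪ (⋃ j, tree q ρ (j :: w))ᶜ := by
    intro t
    by_cases ht : t ∈ ⋃ j, tree q ρ (j :: w)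
    · obtain ⟨j, hj⟩ := mem_iUnion.1 ht
      exact ⟨j, Or.inl hj⟩
    · exact ⟨0, Or.inr ht⟩
  have hmeas : ∀ i, MeasurableSet {t | t ∈ tree q ρ (i :: w) ∪ (⋃ j, tree q ρ (j :: w))ᶜ} :=
    fun i => (measurableSet_tree q ρ _).union
      (MeasurableSet.iUnion fun j => measurableSet_tree q ρ (j :: w)).compl
  convert @measurable_find _ _ _ (fun _ => Classical.decPred _) hex hmeas with t
  exact Nat.sInf_def (hex t)

def word (t : V) : ℕ → List ℕ
  | 0 => []
  | n + 1 => digit q ρ (word t n) t :: word t n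

def sec (t : V) (n : ℕ) : ℕ := digit q ρ (word q ρ t n) t

theorem res_sec (t : V) (n : ℕ) : res (sec q ρ t) n = word q ρ t n := by
  induction n with
  | zero => rfl
  | succ n ih => rw [res_succ, ih]; rfl

theorem measurableSet_word_eq (n : ℕ) : ∀ w, MeasurableSet {t | word q ρ t n = w} := by
  induction n with
  | zero => exact fun w => .const ([] = w)
  | succ n ih =>
    rintro (_ | ⟨i, w⟩)
    · simp [word]
    · have : {t | word q ρ t (n + 1) = i :: w} =
          {t | word q ρ t n = w} ∩ digit q ρ w ⁻¹' {i} := by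
        ext t
        simp only [word, List.cons.injEq, mem_inter_iff, Set.mem_ofPred_eq, mem_preimage,
          mem_singleton_iff]
        constructor <;> rintro ⟨rfl, rfl⟩ <;> exact ⟨rfl, rfl⟩
      rw [this]
      exact (ih w).inter (measurable_digit q ρ w (measurableSet_singleton i))

theorem measurable_sec : Measurable (sec q ρ) := by
  refine measurable_pi_lambda _ fun n => measurable_to_countable' fun i => ?_
  have : (fun t => sec q ρ t n) ⁻¹' {i} = ⋃ w, {t | word q ρ t n = w} ∩ digit q ρ w ⁻¹' {i} := by
    ext t; simp [sec]
  rw [this]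
  exact .iUnion fun w => (measurableSet_word_eq q ρ n w).inter
    (measurable_digit q ρ w (measurableSet_singleton i))

variable [IsFiniteMeasure ρ]

theorem measure_tree_diff_eq_zero (hq : Function.Surjective q) (w : List ℕ) {M : Set V}
    (hM : MeasurableSet M) (hqM : q '' listCylinder w ⊆ M) : ρ (tree q ρ w \ M) = 0 := by
  set lam := ρ.restrict (tree q ρ w)
  have hfull : lam univ ≤ lam M := by
    rw [Measure.restrict_apply_univ, ← restrict_tree_image_listCylinder q ρ hq]
    exact measure_mono hqM
  rw [sdiff_eq, inter_comm, ← Measure.restrict_apply hM.compl,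
    measure_compl hM (measure_ne_top _ _)]
  exact tsub_eq_zero_of_le hfull

theorem measure_tree_diff_iUnion_eq_zero (hq : Function.Surjective q) (w : List ℕ) :
    ρ (tree q ρ w \ ⋃ i, tree q ρ (i :: w)) = 0 := by
  set H := fun i => toMeasurable (ρ.restrict (tree q ρ w)) (q '' listCylinder (i :: w))
  have hdiff : tree q ρ w \ ⋃ i, tree q ρ (i :: w) = tree q ρ w \ ⋃ i, H i := by
    simp only [tree, ← iUnion_inter, sdiff_inter_self_eq_sdiff, H]
  rw [hdiff]
  refine measure_tree_diff_eq_zero q ρ hq w (.iUnion fun _ => measurableSet_toMeasurable _ _) ?_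
  rw [← iUnion_listCylinder_cons, image_iUnion]
  exact iUnion_mono fun _ => subset_toMeasurable _ _

theorem ae_mem_tree_word (hq : Function.Surjective q) :
    ∀ᵐ t ∂ρ, ∀ n, t ∈ tree q ρ (word q ρ t n) := by
  have hcover : ∀ᵐ t ∂ρ, ∀ w, t ∉ tree q ρ w \ ⋃ i, tree q ρ (i :: w) :=
    ae_all_iff.2 fun w =>
      measure_eq_zero_iff_ae_notMem.1 (measure_tree_diff_iUnion_eq_zero q ρ hq w)
  filter_upwards [hcover] with t ht n
  induction n with
  | zero => exact mem_univ t
  | succ n ih => exact mem_tree_digit q ρ (by_contra fun h => ht _ ⟨ih, h⟩)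

theorem ae_mem_closure_image_of_mem_tree [TopologicalSpace V] [OpensMeasurableSpace V]
    (hq : Function.Surjective q) :
    ∀ᵐ t ∂ρ, ∀ w, t ∈ tree q ρ w → t ∈ closure (q '' listCylinder w) :=
  ae_all_iff.2 fun w => (measure_eq_zero_iff_ae_notMem.1 (measure_tree_diff_eq_zero q ρ hq w
    isClosed_closure.measurableSet subset_closure)).mono fun _ ht h =>
      by_contra fun h' => ht ⟨h, h'⟩

end SouslinSection

open PiNat in
theorem Continuous.exists_measurable_ae_section {V : Type*} [TopologicalSpace V] [T2Space V]
    [MeasurableSpace V] [OpensMeasurableSpace V] {q : (ℕ → ℕ) → V} (hq : Continuous q)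
    (hqs : Function.Surjective q) (ρ : Measure V) [IsFiniteMeasure ρ] :
    ∃ s : V → ℕ → ℕ, Measurable s ∧ ∀ᵐ t ∂ρ, q (s t) = t := by
  refine ⟨SouslinSection.sec q ρ, SouslinSection.measurable_sec q ρ, ?_⟩
  filter_upwards [SouslinSection.ae_mem_tree_word q ρ hqs,
    SouslinSection.ae_mem_closure_image_of_mem_tree q ρ hqs] with t hmem hcl
  refine eq_of_forall_mem_closure_image_cylinder hq fun n => ?_
  rw [← listCylinder_res, SouslinSection.res_sec]
  exact hcl _ (hmem n)

theorem IsSouslin.prod {X Y : Type*} [TopologicalSpace X] [TopologicalSpace Y]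
    (hX : IsSouslin X) (hY : IsSouslin Y) : IsSouslin (X × Y) := by
  obtain ⟨P, _, _, _, f, hf, hfs⟩ := hX
  obtain ⟨Q, _, _, _, g, hg, hgs⟩ := hY
  exact ⟨P × Q, inferInstance, inferInstance, inferInstance, Prod.map f g, hf.prodMap hg,
    hfs.prodMap hgs⟩

theorem IsSouslin.secondCountableTopology {X : Type*} [TopologicalSpace X]
    [TopologicalSpace.PseudoMetrizableSpace X] (hX : IsSouslin X) : SecondCountableTopology X := by
  obtain ⟨P, _, _, _, f, hf, hfs⟩ := hX
  let := TopologicalSpace.pseudoMetrizableSpacePseudoMetric X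
  have := hfs.denseRange.separableSpace hf
  exact UniformSpace.secondCountable_of_separable X

theorem Measurable.exists_nat_nat_continuous_surjective_comp {P V : Type*} [TopologicalSpace P]
    [PolishSpace P] [MeasurableSpace P] [BorelSpace P] [Nonempty P] [TopologicalSpace V]
    [SecondCountableTopology V] [MeasurableSpace V] [OpensMeasurableSpace V] {f : P → V}
    (hf : Measurable f) :
    ∃ u : (ℕ → ℕ) → P, Continuous u ∧ Function.Surjective u ∧ Continuous (f ∘ u) := by
  obtain ⟨τ, hτ, hfτ, hτP⟩ := hf.exists_continuous
  obtain ⟨u, hu, hus⟩ := @PolishSpace.exists_nat_nat_continuous_surjective P τ hτP _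
  exact ⟨u, continuous_le_rng hτ hu, hus, hfτ.comp hu⟩

theorem IsSouslin.exists_continuous_surjective_nat_nat {W V : Type*} [TopologicalSpace W]
    [MeasurableSpace W] [BorelSpace W] [Nonempty W] [TopologicalSpace V]
    [SecondCountableTopology V] [MeasurableSpace V] [OpensMeasurableSpace V]
    (hW : IsSouslin W) {F : W → V} (hF : Measurable F) :
    ∃ r : (ℕ → ℕ) → W, Continuous r ∧ Function.Surjective r ∧ Continuous (F ∘ r) := by
  obtain ⟨P, _, _, _, φ, hφ, hφs⟩ := hW
  let : MeasurableSpace P := borel P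
  have : BorelSpace P := ⟨rfl⟩
  have : SecondCountableTopology P := UniformSpace.secondCountable_of_separable P
  have : Nonempty P := hφs.nonempty
  obtain ⟨u, hu, hus, hFu⟩ := (hF.comp hφ.measurable).exists_nat_nat_continuous_surjective_comp
  exact ⟨φ ∘ u, hφ.comp hu, hφs.comp hus, hFu⟩

theorem IsSouslin.exists_measurable_ae_section {W V : Type*} [TopologicalSpace W]
    [MeasurableSpace W] [BorelSpace W] [TopologicalSpace V] [T2Space V]
    [SecondCountableTopology V] [MeasurableSpace V] [OpensMeasurableSpace V]
    (hW : IsSouslin W) {F : W → V} (hF : Measurable F) (hFs : Function.Surjective F)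
    (ρ : Measure V) [IsFiniteMeasure ρ] :
    ∃ g : V → W, Measurable g ∧ ∀ᵐ v ∂ρ, F (g v) = v := by
  cases isEmpty_or_nonempty W
  · have : IsEmpty V := hFs.isEmpty
    exact ⟨isEmptyElim, Subsingleton.measurable, .of_forall isEmptyElim⟩
  obtain ⟨r, hr, hrs, hFr⟩ := hW.exists_continuous_surjective_nat_nat hF
  obtain ⟨s, hs, hFrs⟩ := hFr.exists_measurable_ae_section (hFs.comp hrs) ρ
  exact ⟨r ∘ s, hr.measurable.comp hs, hFrs⟩

theorem exists_isFiniteMeasure_forall_absolutelyContinuous {α ι : Type*} [MeasurableSpace α]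
    [Countable ι] (ν : ι → Measure α) [∀ i, SFinite (ν i)] :
    ∃ ρ : Measure α, IsFiniteMeasure ρ ∧ ∀ i, ν i ≪ ρ := by
  obtain ⟨ρ, hρ, hνρ, -⟩ := exists_isFiniteMeasure_absolutelyContinuous (Measure.sum ν)
  exact ⟨ρ, hρ, fun i => (Measure.absolutelyContinuous_sum_right i .rfl).trans hνρ⟩

theorem exists_isCPS_pushArray_eq_of_ae_section {W V : Type*} [MeasurableSpace W]
    [MeasurableSpace V] {BW : Set (Set W)} {BV : Set (Set V)} {F : W → V} (hF : Measurable F)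
    (hFs : Function.Surjective F) (hBV : ∀ b ∈ BV, MeasurableSet b)
    (hB : BW = (fun E => F ⁻¹' E) '' BV) {ν : BV → ProbabilityMeasure V} (hν : IsCPS BV ν)
    {g : V → W} (hg : Measurable g) (hgF : ∀ b, ∀ᵐ v ∂(ν b : Measure V), F (g v) = v) :
    ∃ μ : BW → ProbabilityMeasure W, IsCPS BW μ ∧ pushArray F hF hB μ = ν := by
  let e : BV ≃ BW := Equiv.ofBijective
    (fun b => ⟨F ⁻¹' b, by rw [hB]; exact mem_image_of_mem _ b.2⟩)
    ⟨fun b b' h => Subtype.ext (hFs.preimage_injective (congrArg Subtype.val h)), by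
      rintro ⟨c, hc⟩
      obtain ⟨b, hb, rfl⟩ : c ∈ (fun E => F ⁻¹' E) '' BV := hB ▸ hc
      exact ⟨⟨b, hb⟩, rfl⟩⟩
  let μ : BW → ProbabilityMeasure W := fun c => (ν (e.symm c)).map hg.aemeasurable
  have he : ∀ b, (e b : Set W) = F ⁻¹' b := fun _ => rfl
  have hμ : ∀ b (A : Set W), MeasurableSet A →
      (μ (e b) : Measure W) A = (ν b : Measure V) (g ⁻¹' A) :=
    fun b A hA => by simp [μ, Measure.map_apply hg hA]
  have hpre : ∀ b (E : Set V), (ν b : Measure V) (g ⁻¹' (F ⁻¹' E)) = (ν b : Measure V) E :=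
    fun b E => measure_congr <| Filter.eventuallyEq_set.2 <| (hgF b).mono fun v hv => by simp [hv]
  have hcut : ∀ b b' (A : Set W), A ⊆ F ⁻¹' b →
      (ν b' : Measure V) (g ⁻¹' A ∩ b) = (ν b' : Measure V) (g ⁻¹' A) :=
    fun b b' A hA => measure_congr <| Filter.eventuallyEq_set.2 <| (hgF b').mono fun v hv =>
      ⟨And.left, fun h => ⟨h, hv ▸ hA h⟩⟩
  refine ⟨μ, ⟨fun c => ?_, fun A hA c c' hAc hcc' => ?_⟩, ?_⟩
  · obtain ⟨b, rfl⟩ := e.surjective c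
    rw [he, hμ b _ (hF (hBV b b.2))]
    exact (hpre b b).trans (hν.1 b)
  · obtain ⟨b, rfl⟩ := e.surjective c
    obtain ⟨b', rfl⟩ := e.surjective c'
    rw [he] at hAc hcc'
    have hbb' : (b : Set V) ⊆ b' := hFs.preimage_subset_preimage_iff.1 hcc'
    rw [he, hμ b A hA, hμ b' A hA, hμ b' _ (hF (hBV b b.2)), hpre, ← hcut b b A hAc,
      ← hcut b b' A hAc]
    exact hν.2 _ ((hg hA).inter (hBV b b.2)) b b' inter_subset_right hbb'
  · funext b
    apply Subtype.ext
    change ((μ (e b) : Measure W)).map F = ν b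
    simp only [μ, Equiv.symm_apply_apply, ProbabilityMeasure.toMeasure_map]
    rw [Measure.map_map hF hg, Measure.map_congr (f := F ∘ g) (g := id) (hgF b), Measure.map_id]

theorem measurableSet_of_mem_cylFam {X Y : Type*} [TopologicalSpace X] [MeasurableSpace X]
    [BorelSpace X] [TopologicalSpace Y] [MeasurableSpace (X × Y)] [OpensMeasurableSpace (X × Y)]
    {B : Set (Set X)} (hB : ∀ b ∈ B, MeasurableSet b) : ∀ c ∈ cylFam B Y, MeasurableSet c := by
  rintro _ ⟨b, hb, rfl⟩
  change MeasurableSet (b ×ˢ univ)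
  rw [prod_univ]
  exact continuous_fst.measurable (hB b hb)

theorem prod_push_surjective_general {X Y Z : Type*}
    [TopologicalSpace X] [MeasurableSpace X] [BorelSpace X] [TopologicalSpace.MetrizableSpace X]
    [TopologicalSpace Y]
    [TopologicalSpace Z] [TopologicalSpace.MetrizableSpace Z]
    [MeasurableSpace (X × Y)] [BorelSpace (X × Y)]
    [MeasurableSpace (X × Z)] [BorelSpace (X × Z)]
    (hX : IsSouslin X) (hY : IsSouslin Y) (hZ : IsSouslin Z)
    {B : Set (Set X)} (hB : IsCondFamily B) (hBc : B.Countable)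
    (f₁ : Y → Z) (hf₁surj : Function.Surjective f₁) :
    ∀ (hf₂ : Measurable (fun p : X × Y => (p.1, f₁ p.2)))
      (hcyl : cylFam B Y = (fun E => (fun p : X × Y => (p.1, f₁ p.2)) ⁻¹' E) '' cylFam B Z)
      (ν : cylFam B Z → ProbabilityMeasure (X × Z)), IsCPS (cylFam B Z) ν →
      ∃ μ : cylFam B Y → ProbabilityMeasure (X × Y),
        IsCPS (cylFam B Y) μ ∧ pushArray _ hf₂ hcyl μ = ν := by
  intro hf₂ hcyl ν hν
  have := hX.secondCountableTopology
  have := hZ.secondCountableTopology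
  have : Countable (cylFam B Z) := (hBc.image _).to_subtype
  obtain ⟨ρ, _, hνρ⟩ :=
    exists_isFiniteMeasure_forall_absolutelyContinuous fun b => (ν b : Measure (X × Z))
  obtain ⟨g, hg, hgF⟩ := (hX.prod hY).exists_measurable_ae_section hf₂
    (Function.surjective_id.prodMap hf₁surj) ρ
  exact exists_isCPS_pushArray_eq_of_ae_section hf₂ (Function.surjective_id.prodMap hf₁surj)
    (measurableSet_of_mem_cylFam hB.2.2) hcyl hν hg fun b => (hνρ b).ae_le hgF

/-- Lemma 3(ii): for metrizable Souslin spaces `X, Y, Z`, a countable family `B` of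
conditioning events of `X`, and a Borel measurable surjection `f₁ : Y → Z`, the
pushforward-CPS map `L̄_{f₂} : Δ^B(X × Y) → Δ^B(X × Z)` induced by `f₂ := (Id_X, f₁)`
is surjective. -/
theorem prod_push_surjective {X Y Z : Type*}
    [TopologicalSpace X] [MeasurableSpace X] [BorelSpace X] [TopologicalSpace.MetrizableSpace X]
    [TopologicalSpace Y] [MeasurableSpace Y] [BorelSpace Y] [TopologicalSpace.MetrizableSpace Y]
    [TopologicalSpace Z] [MeasurableSpace Z] [BorelSpace Z] [TopologicalSpace.MetrizableSpace Z]
    [MeasurableSpace (X × Y)] [BorelSpace (X × Y)]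
    [MeasurableSpace (X × Z)] [BorelSpace (X × Z)]
    (hX : IsSouslin X) (hY : IsSouslin Y) (hZ : IsSouslin Z)
    {B : Set (Set X)} (hB : IsCondFamily B) (hBc : B.Countable)
    (f₁ : Y → Z) (hf₁ : Measurable f₁) (hf₁surj : Function.Surjective f₁) :
    ∀ (hf₂ : Measurable (fun p : X × Y => (p.1, f₁ p.2)))
      (hcyl : cylFam B Y = (fun E => (fun p : X × Y => (p.1, f₁ p.2)) ⁻¹' E) '' cylFam B Z)
      (ν : cylFam B Z → ProbabilityMeasure (X × Z)), IsCPS (cylFam B Z) ν →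
      ∃ μ : cylFam B Y → ProbabilityMeasure (X × Y),
        IsCPS (cylFam B Y) μ ∧ pushArray _ hf₂ hcyl μ = ν :=
  prod_push_surjective_general hX hY hZ hB hBc f₁ hf₁surj
end
end
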